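/- Any square box of side length √n on the grid can contain at most 2√n pairwise disconnected components of a connected shape, since each component must touch one of the four boundaries via a path, each length-√n boundary can support at most √n/2 distinct components, and there are 4 boundaries. -/

import Mathlib

/-!
If there are at least two components, a path in `S` from a component `C` to another one leaves
`C` at some cell whose successor lies in `S` but not in `C`; by maximality of `C` that successor
lies outside the box, so `C` meets the frame of the box. Cells of distinct components are distinct
and non-adjacent, so one frame cell per component gives pairwise non-adjacent frame cells, and
cutting each side of the frame into pairs of consecutive cells shows there are at most `2s` of
them.
-/

/-- Two grid cells are adjacent (8-connectivity) if they are distinct and differ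
by at most 1 in each coordinate. -/
def GridAdj (u v : ℤ × ℤ) : Prop :=
  u ≠ v ∧ |u.1 - v.1| ≤ 1 ∧ |u.2 - v.2| ≤ 1

/-- A set of cells is connected if any two of its cells are joined by a path of
adjacent cells inside the set. -/
def GridConn (A : Set (ℤ × ℤ)) : Prop :=
  ∀ u ∈ A, ∀ v ∈ A,
    Relation.ReflTransGen (fun a b => GridAdj a b ∧ a ∈ A ∧ b ∈ A) u v

lemma GridAdj.symm {u v : ℤ × ℤ} (h : GridAdj u v) : GridAdj v u :=
  ⟨h.1.symm, abs_sub_comm u.1 v.1 ▸ h.2.1, abs_sub_comm u.2 v.2 ▸ h.2.2⟩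

lemma GridConn.insert_of_gridAdj {A : Set (ℤ × ℤ)} {b c : ℤ × ℤ} (hA : GridConn A) (hb : b ∈ A)
    (hbc : GridAdj b c) : GridConn (insert c A) := by
  have lift : ∀ {u v}, u ∈ A → v ∈ A →
      Relation.ReflTransGen (fun p q => GridAdj p q ∧ p ∈ insert c A ∧ q ∈ insert c A) u v :=
    fun hu hv => Relation.ReflTransGen.mono (fun _ _ h => ⟨h.1, .inr h.2.1, .inr h.2.2⟩) _ _
      (hA _ hu _ hv)
  rintro u (rfl | hu) v (rfl | hv)
  · exact .refl
  · exact .head ⟨hbc.symm, .inl rfl, .inr hb⟩ (lift hb hv)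
  · exact (lift hu hb).tail ⟨hbc, .inr hb, .inl rfl⟩
  · exact lift hu hv

lemma Relation.ReflTransGen.exists_step_of_notMem {α : Type*} {r : α → α → Prop}
    {P : Set α} {a b : α} (h : ReflTransGen r a b) (ha : a ∈ P) (hb : b ∉ P) :
    ∃ c ∈ P, ∃ d ∉ P, r c d := by
  by_contra! hclosed
  exact hb (h.rec ha fun _ hcd hc => by_contra fun hd => hclosed _ hc _ hd hcd)

def IsGridComponent (T C : Set (ℤ × ℤ)) : Prop :=
  C ⊆ T ∧ GridConn C ∧ ∀ A : Set (ℤ × ℤ), C ⊆ A → A ⊆ T → GridConn A → A = C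

namespace IsGridComponent

variable {T C : Set (ℤ × ℤ)}

lemma mem_of_gridAdj (hC : IsGridComponent T C) {b c : ℤ × ℤ} (hb : b ∈ C) (hc : c ∈ T)
    (hbc : GridAdj b c) : c ∈ C := by
  obtain ⟨hCT, hconn, hmax⟩ := hC
  rw [← hmax _ (Set.subset_insert c C) (Set.insert_subset hc hCT)
    (hconn.insert_of_gridAdj hb hbc)]
  exact Set.mem_insert c C

lemma not_gridAdj_of_disjoint (hC : IsGridComponent T C) {D : Set (ℤ × ℤ)} (hDT : D ⊆ T)
    (hCD : Disjoint C D) {b c : ℤ × ℤ} (hb : b ∈ C) (hc : c ∈ D) : ¬ GridAdj b c :=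
  fun hbc => Set.disjoint_left.1 hCD (hC.mem_of_gridAdj hb (hDT hc) hbc) hc


lemma exists_gridAdj_notMem {S B : Set (ℤ × ℤ)} (hS : GridConn S)
    (hC : IsGridComponent (S ∩ B) C) {u v : ℤ × ℤ} (hu : u ∈ C) (hv : v ∈ S) (hvC : v ∉ C) :
    ∃ b ∈ C, ∃ c ∉ B, GridAdj b c := by
  obtain ⟨b, hb, c, hcC, hbc, -, hcS⟩ :=
    (hS u (hC.1 hu).1 v hv).exists_step_of_notMem hu hvC
  exact ⟨b, hb, c, fun hcB => hcC (hC.mem_of_gridAdj hb ⟨hcS, hcB⟩ hbc), hbc⟩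

end IsGridComponent

def gridBox (x y : ℤ) (s : ℕ) : Set (ℤ × ℤ) :=
  {p | x ≤ p.1 ∧ p.1 < x + s ∧ y ≤ p.2 ∧ p.2 < y + s}

def gridBoxFrame (x y : ℤ) (s : ℕ) : Set (ℤ × ℤ) :=
  {p ∈ gridBox x y s | p.1 = x ∨ p.1 = x + s - 1 ∨ p.2 = y ∨ p.2 = y + s - 1}

lemma mem_gridBoxFrame_of_gridAdj {x y : ℤ} {s : ℕ} {b c : ℤ × ℤ} (hb : b ∈ gridBox x y s)
    (hc : c ∉ gridBox x y s) (hbc : GridAdj b c) : b ∈ gridBoxFrame x y s := by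
  have h₁ := abs_le.1 hbc.2.1
  have h₂ := abs_le.1 hbc.2.2
  simp only [gridBoxFrame, gridBox, Set.mem_ofPred_eq] at hb hc ⊢
  omega

/-- Left and right sides are cut into `⌈s/2⌉` pairs of consecutive cells each, the remaining
cells of the bottom and top sides into `⌈s/2⌉ - 1` pairs each; `4⌈s/2⌉ - 2 ≤ 2s`. -/
def frameIndex (x y : ℤ) (s : ℕ) (p : ℤ × ℤ) : ℤ :=
  if p.1 = x then (p.2 - y) / 2
  else if p.1 = x + s - 1 then ((s : ℤ) + 1) / 2 + (p.2 - y) / 2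
  else if p.2 = y then 2 * (((s : ℤ) + 1) / 2) + (p.1 - x - 1) / 2
  else 2 * (((s : ℤ) + 1) / 2) + ((s : ℤ) - 1) / 2 + (p.1 - x - 1) / 2

lemma frameIndex_mem_Ico {x y : ℤ} {s : ℕ} {p : ℤ × ℤ} (hp : p ∈ gridBox x y s) :
    frameIndex x y s p ∈ Finset.Ico 0 (2 * (s : ℤ)) := by
  simp only [gridBox, Set.mem_ofPred_eq] at hp
  simp only [frameIndex, Finset.mem_Ico]
  split_ifs <;> omega

lemma eq_or_gridAdj_of_frameIndex_eq {x y : ℤ} {s : ℕ} {p q : ℤ × ℤ}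
    (hp : p ∈ gridBoxFrame x y s) (hq : q ∈ gridBoxFrame x y s)
    (hpq : frameIndex x y s p = frameIndex x y s q) : p = q ∨ GridAdj p q := by
  refine or_iff_not_imp_left.2 fun hne => ⟨hne, abs_le.2 ?_, abs_le.2 ?_⟩ <;>
  · simp only [gridBoxFrame, gridBox, Set.mem_ofPred_eq] at hp hq
    simp only [frameIndex] at hpq
    split_ifs at hpq <;> omega

lemma card_le_of_pairwise_not_gridAdj {ι : Type*} [Fintype ι] {x y : ℤ} {s : ℕ} (f : ι → ℤ × ℤ)
    (hf : ∀ i, f i ∈ gridBoxFrame x y s)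
    (hsep : Pairwise fun i j => f i ≠ f j ∧ ¬ GridAdj (f i) (f j)) :
    Fintype.card ι ≤ 2 * s := by
  have hinj : Function.Injective fun i => frameIndex x y s (f i) := fun i j hij =>
    by_contra fun hne => (eq_or_gridAdj_of_frameIndex_eq (hf i) (hf j) hij).elim
      (hsep hne).1 (hsep hne).2
  have := Finset.card_le_card_of_injOn (s := Finset.univ) _
    (fun i _ => frameIndex_mem_Ico (hf i).1) hinj.injOn
  rw [Finset.card_univ, Int.card_Ico, sub_zero] at this
  omega

theorem components_in_box_bound_general (s : ℕ) (hs0 : 0 < s)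
    (x y : ℤ) (S : Set (ℤ × ℤ)) (hSconn : GridConn S)
    (B : Set (ℤ × ℤ))
    (hB : B = {p : ℤ × ℤ | x ≤ p.1 ∧ p.1 < x + s ∧ y ≤ p.2 ∧ p.2 < y + s})
    (r : ℕ) (C : Fin r → Set (ℤ × ℤ))
    (hsub : ∀ i, C i ⊆ S ∩ B)
    (hne : ∀ i, (C i).Nonempty)
    (hconn : ∀ i, GridConn (C i))
    (hmax : ∀ i, ∀ A : Set (ℤ × ℤ), C i ⊆ A → A ⊆ S ∩ B → GridConn A → A = C i)
    (hdisj : ∀ i j, i ≠ j → Disjoint (C i) (C j)) :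
    r ≤ 2 * s := by
  change B = gridBox x y s at hB
  subst hB
  rcases lt_or_ge r 2 with hr | hr
  · omega
  have : Nontrivial (Fin r) := Fin.nontrivial_iff_two_le.2 hr
  have hcomp i : IsGridComponent (S ∩ gridBox x y s) (C i) := ⟨hsub i, hconn i, hmax i⟩
  have hframe i : ∃ b ∈ C i, b ∈ gridBoxFrame x y s := by
    obtain ⟨j, hji⟩ := exists_ne i
    obtain ⟨u, hu⟩ := hne i
    obtain ⟨v, hv⟩ := hne j
    obtain ⟨b, hb, c, hc, hbc⟩ := (hcomp i).exists_gridAdj_notMem hSconn hu (hsub j hv).1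
      (Set.disjoint_left.1 (hdisj j i hji) hv)
    exact ⟨b, hb, mem_gridBoxFrame_of_gridAdj (hsub i hb).2 hc hbc⟩
  choose f hfC hf using hframe
  have hsep : Pairwise fun i j => f i ≠ f j ∧ ¬ GridAdj (f i) (f j) := fun i j hij =>
    ⟨fun h => Set.disjoint_left.1 (hdisj i j hij) (hfC i) (h ▸ hfC j),
      (hcomp i).not_gridAdj_of_disjoint (hsub j) (hdisj i j hij) (hfC i) (hfC j)⟩
  simpa using card_le_of_pairwise_not_gridAdj f hf hsep

/-- Any `√n × √n` box can contain at most `2√n` pairwise disjoint components of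
a connected shape `S`: if `C 0, …, C (r-1)` are nonempty, pairwise disjoint,
connected, maximal connected subsets of `S ∩ B` for a `s × s` box `B`
(`s = √n`), then `r ≤ 2s`. -/
theorem components_in_box_bound (n s : ℕ) (hs : s * s = n) (hs0 : 0 < s)
    (x y : ℤ) (S : Set (ℤ × ℤ)) (hSconn : GridConn S)
    (B : Set (ℤ × ℤ))
    (hB : B = {p : ℤ × ℤ | x ≤ p.1 ∧ p.1 < x + s ∧ y ≤ p.2 ∧ p.2 < y + s})
    (r : ℕ) (C : Fin r → Set (ℤ × ℤ))
    (hsub : ∀ i, C i ⊆ S ∩ B)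
    (hne : ∀ i, (C i).Nonempty)
    (hconn : ∀ i, GridConn (C i))
    (hmax : ∀ i, ∀ A : Set (ℤ × ℤ), C i ⊆ A → A ⊆ S ∩ B → GridConn A → A = C i)
    (hdisj : ∀ i j, i ≠ j → Disjoint (C i) (C j)) :
    r ≤ 2 * s :=
  components_in_box_bound_general s hs0 x y S hSconn B hB r C hsub hne hconn hmax hdisj
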